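/- The convexifiable domain K(X) of a CC space X is a semiconvex set under P_λ(x,y) := [λ,x;1−λ,y]: it satisfies reflexivity P_λ(x,x)=x, symmetry P_λ(x,y)=P_{1−λ}(y,x), and the associativity law P_r(P_λ(x,y),z) = P_{rλ}(x, P_μ(y,z)) whenever r = μ/(1−λ+λμ) with λ,μ ∈ (0,1). -/

import Mathlib

/-! Symmetry is commutativity (CC.i), and associativity holds because both sides flatten to the
same ternary combination of `x, y, z`: the relation `r = μ / (1 - λ + λ μ)` is exactly what makes
their weights agree. Reflexivity is where `K` enters. If `u = K u`, the uniform combinations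
`u_n = [n⁻¹, u]ᵢ₌₁ⁿ` tend to `u`, and flattening gives `[a/(a+b), u_a; b/(a+b), u_b] = u_(a+b)`.
Replacing `a, b` by `ak, bk` and letting `k → ∞`, negative curvature (CC.iv) passes to the limit
on the left and yields `[λ, u; 1 - λ, u] = u` for rational `λ`; continuity in the weight (CC.iii)
extends this to all `λ ∈ (0, 1)`. -/

open scoped BigOperators
open Filter MeasureTheory

/-- A convex combination space (Terán–Molchanov): a metric space with an
`n`-ary convex combination operation for positive weights summing to `1`. -/
structure CCSpace (X : Type) [MetricSpace X] where
  /-- the convex combination operation `[w 0, u 0; …; w (n-1), u (n-1)]` -/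
  comb : ∀ {n : ℕ}, (Fin n → ℝ) → (Fin n → X) → X
  /-- the convexification operator -/
  K : X → X
  comb_single : ∀ u : X, comb (fun _ : Fin 1 => (1 : ℝ)) (fun _ => u) = u
  /-- (CC.i) commutativity -/
  comb_perm : ∀ {n : ℕ} (w : Fin n → ℝ) (u : Fin n → X) (σ : Equiv.Perm (Fin n)),
    (∀ i, 0 < w i) → (∑ i, w i) = 1 → comb w u = comb (w ∘ σ) (u ∘ σ)
  /-- (CC.ii) associativity: the last two terms may be combined first -/
  comb_assoc : ∀ {n : ℕ} (w : Fin (n + 2) → ℝ) (u : Fin (n + 2) → X),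
    (∀ i, 0 < w i) → (∑ i, w i) = 1 →
    comb w u =
      comb
        (Fin.snoc (fun i : Fin n => w (Fin.castLE (by omega) i))
          (w ⟨n, by omega⟩ + w ⟨n + 1, by omega⟩))
        (Fin.snoc (fun i : Fin n => u (Fin.castLE (by omega) i))
          (comb
            ![w ⟨n, by omega⟩ / (w ⟨n, by omega⟩ + w ⟨n + 1, by omega⟩),
              w ⟨n + 1, by omega⟩ / (w ⟨n, by omega⟩ + w ⟨n + 1, by omega⟩)]
            ![u ⟨n, by omega⟩, u ⟨n + 1, by omega⟩]))
  /-- (CC.iii) continuity in the weight -/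
  comb_cont : ∀ u v : X,
    ContinuousOn (fun t : ℝ => comb ![t, 1 - t] ![u, v]) (Set.Ioo (0 : ℝ) 1)
  /-- (CC.iv) negative curvature -/
  comb_nc : ∀ {n : ℕ} (w : Fin n → ℝ) (u v : Fin n → X),
    (∀ i, 0 < w i) → (∑ i, w i) = 1 →
    dist (comb w u) (comb w v) ≤ ∑ i, w i * dist (u i) (v i)
  /-- (CC.v) convexification: `[n⁻¹, u]ᵢ₌₁ⁿ → K u` -/
  tendsto_K : ∀ u : X,
    Tendsto (fun n : ℕ => comb (fun _ : Fin n => (n : ℝ)⁻¹) (fun _ => u))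
      atTop (nhds (K u))

namespace CCSpace

variable {X : Type} [MetricSpace X] (S : CCSpace X)

/-- The convexifiable domain `K(X)`: the set of convex points. -/
def KX : Set X := {u : X | S.K u = u}

/-- Binary convex combination with weights in `[0,1]`, extended to the endpoints
by discarding the zero-weight term. -/
noncomputable def comb2 (t : ℝ) (x y : X) : X :=
  if t = 0 then y else if t = 1 then x else S.comb ![t, 1 - t] ![x, y]

/-- Convex combination for nonnegative weights summing to `1`, defined by
discarding the zero-weight terms. -/
noncomputable def combE {n : ℕ} (w : Fin n → ℝ) (u : Fin n → X) : X :=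
  letI : DecidablePred fun i : Fin n => w i ≠ 0 := Classical.decPred _
  S.comb (fun j => w ((Fintype.equivFin {i : Fin n // w i ≠ 0}).symm j))
    (fun j => u ((Fintype.equivFin {i : Fin n // w i ≠ 0}).symm j))

/-- A function is affine if it commutes with all convex combinations. -/
def IsAffine (f : X → ℝ) : Prop :=
  ∀ ⦃n : ℕ⦄ (w : Fin n → ℝ) (x : Fin n → X), (∀ i, 0 < w i) → (∑ i, w i) = 1 →
    f (S.comb w x) = ∑ i, w i * f (x i)

/-- Midpoint convexity. -/
def MidpointConvex (φ : X → ℝ) : Prop :=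
  ∀ x y : X, φ (S.comb ![(1 : ℝ) / 2, 1 / 2] ![x, y]) ≤ (φ x + φ y) / 2

theorem comb_comp_equiv {m n : ℕ} (e : Fin m ≃ Fin n) (w : Fin n → ℝ) (u : Fin n → X)
    (hw : ∀ i, 0 < w i) (hw1 : ∑ i, w i = 1) : S.comb (w ∘ e) (u ∘ e) = S.comb w u := by
  obtain rfl : m = n := by simpa using Fintype.card_congr e
  exact (S.comb_perm w u e hw hw1).symm

theorem comb_pair_comm {s t : ℝ} (hs : 0 < s) (ht : 0 < t) (hst : s + t = 1) (x y : X) :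
    S.comb ![s, t] ![x, y] = S.comb ![t, s] ![y, x] := by
  rw [← S.comb_comp_equiv (Equiv.swap 0 1) ![t, s] ![y, x] (by simp [Fin.forall_fin_two, hs, ht])
    (by simp; linarith)]
  congr 1 <;> funext i <;> fin_cases i <;> simp

theorem comb_append_comm {m n : ℕ} (v : Fin m → ℝ) (w : Fin n → ℝ) (xs : Fin m → X)
    (ys : Fin n → X) (hv : ∀ i, 0 < v i) (hw : ∀ i, 0 < w i) (hvw : ∑ i, v i + ∑ i, w i = 1) :
    S.comb (Fin.append v w) (Fin.append xs ys) = S.comb (Fin.append w v) (Fin.append ys xs) := by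
  let e : Fin (m + n) ≃ Fin (n + m) :=
    finSumFinEquiv.symm.trans ((Equiv.sumComm _ _).trans finSumFinEquiv)
  have append_comp_e {α : Type} (f : Fin m → α) (g : Fin n → α) :
      Fin.append g f ∘ e = Fin.append f g := by
    funext i; refine Fin.addCases (fun i => ?_) (fun i => ?_) i <;> simp [e]
  rw [← append_comp_e v w, ← append_comp_e xs ys]
  refine S.comb_comp_equiv e _ _ ?_ ?_
  · simp [Fin.forall_fin_add, hv, hw]
  · simpa [Fin.sum_univ_add, add_comm] using hvw

theorem comb_snoc_snoc {n : ℕ} (w : Fin n → ℝ) (a b : ℝ) (u : Fin n → X) (p q : X)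
    (hw : ∀ i, 0 < w i) (ha : 0 < a) (hb : 0 < b) (hsum : ∑ i, w i + a + b = 1) :
    S.comb (Fin.snoc (Fin.snoc w a) b) (Fin.snoc (Fin.snoc u p) q) =
      S.comb (Fin.snoc w (a + b)) (Fin.snoc u (S.comb ![a / (a + b), b / (a + b)] ![p, q])) := by
  rw [S.comb_assoc _ _ (by simp [Fin.forall_iff_castSucc, hw, ha, hb])
    (by simpa [Fin.sum_univ_castSucc] using hsum)]
  congr 1 <;> funext i <;> refine Fin.lastCases ?_ (fun i => ?_) i <;> simp [Fin.snoc] <;> rfl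

theorem _root_.Fin.smul_snoc {M α : Type*} [SMul M α] {n : ℕ} (c : M) (w : Fin n → α) (a : α) :
    c • (Fin.snoc w a : Fin (n + 1) → α) = Fin.snoc (c • w) (c • a) := by
  funext i; refine Fin.lastCases ?_ (fun i => ?_) i <;> simp

theorem comb_append_smul_eq_comb_snoc {m n : ℕ} (v : Fin m → ℝ) (t : ℝ) (w : Fin n → ℝ)
    (xs : Fin m → X) (ys : Fin n → X) (hv : ∀ i, 0 < v i) (ht : 0 < t) (hw : ∀ i, 0 < w i)
    (hvt : ∑ i, v i + t = 1) (hw1 : ∑ i, w i = 1) :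
    S.comb (Fin.append v (t • w)) (Fin.append xs ys) =
      S.comb (Fin.snoc v t) (Fin.snoc xs (S.comb w ys)) := by
  induction n with
  | zero => simp at hw1
  | succ n ih =>
    cases n with
    | zero =>
      obtain rfl : w = fun _ => 1 := funext fun i => by simpa [Fin.fin_one_eq_zero i] using hw1
      obtain ⟨y, rfl⟩ : ∃ y, ys = fun _ => y := ⟨ys 0, funext fun i => by rw [Fin.fin_one_eq_zero i]⟩
      rw [Fin.append_right_eq_snoc, Fin.append_right_eq_snoc, S.comb_single]
      simp
    | succ n =>
      obtain ⟨w, b, rfl⟩ : ∃ w' b, w = Fin.snoc w' b := ⟨_, _, (Fin.snoc_init_self w).symm⟩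
      obtain ⟨w, a, rfl⟩ : ∃ w' a, w = Fin.snoc w' a := ⟨_, _, (Fin.snoc_init_self w).symm⟩
      obtain ⟨ys, q, rfl⟩ : ∃ ys' q, ys = Fin.snoc ys' q := ⟨_, _, (Fin.snoc_init_self ys).symm⟩
      obtain ⟨ys, p, rfl⟩ : ∃ ys' p, ys = Fin.snoc ys' p := ⟨_, _, (Fin.snoc_init_self ys).symm⟩
      simp only [Fin.forall_iff_castSucc, Fin.snoc_castSucc, Fin.snoc_last] at hw
      obtain ⟨hb, ha, hw⟩ := hw
      simp only [Fin.sum_univ_castSucc, Fin.snoc_castSucc, Fin.snoc_last] at hw1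
      have hab : 0 < a + b := add_pos ha hb
      set r := S.comb ![a / (a + b), b / (a + b)] ![p, q]
      calc S.comb (Fin.append v (t • Fin.snoc (Fin.snoc w a) b))
            (Fin.append xs (Fin.snoc (Fin.snoc ys p) q))
          = S.comb (Fin.snoc (Fin.snoc (Fin.append v (t • w)) (t * a)) (t * b))
              (Fin.snoc (Fin.snoc (Fin.append xs ys) p) q) := by
            simp only [Fin.smul_snoc, Fin.append_snoc, smul_eq_mul]
        _ = S.comb (Fin.snoc (Fin.append v (t • w)) (t * a + t * b))
              (Fin.snoc (Fin.append xs ys) r) := by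
            rw [S.comb_snoc_snoc _ _ _ _ _ _ (by simp [Fin.forall_fin_add, hv, ht, hw])
              (by positivity) (by positivity)]
            · simp only [r, ← mul_add, mul_div_mul_left _ _ ht.ne']
            · simp only [Fin.sum_univ_add, Fin.append_left, Fin.append_right, Pi.smul_apply,
                smul_eq_mul, ← Finset.mul_sum]
              linear_combination hvt + t * hw1
        _ = S.comb (Fin.append v (t • Fin.snoc w (a + b))) (Fin.append xs (Fin.snoc ys r)) := by
            rw [Fin.smul_snoc, Fin.append_snoc, Fin.append_snoc, smul_eq_mul, mul_add]
        _ = S.comb (Fin.snoc v t) (Fin.snoc xs (S.comb (Fin.snoc w (a + b)) (Fin.snoc ys r))) :=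
            ih _ _ (by simp [Fin.forall_iff_castSucc, hw, hab])
              (by simp [Fin.sum_univ_castSucc]; linarith)
        _ = _ := by
            rw [S.comb_snoc_snoc _ _ _ _ _ _ hw ha hb hw1]

theorem comb_append_smul {m n : ℕ} {s t : ℝ} (v : Fin m → ℝ) (w : Fin n → ℝ) (xs : Fin m → X)
    (ys : Fin n → X) (hs : 0 < s) (ht : 0 < t) (hst : s + t = 1) (hv : ∀ i, 0 < v i)
    (hw : ∀ i, 0 < w i) (hv1 : ∑ i, v i = 1) (hw1 : ∑ i, w i = 1) :
    S.comb (Fin.append (s • v) (t • w)) (Fin.append xs ys) =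
      S.comb ![s, t] ![S.comb v xs, S.comb w ys] := by
  have hsv : ∀ i, 0 < (s • v) i := fun i => mul_pos hs (hv i)
  have hsv1 : ∑ i, (s • v) i = s := by simp [← Finset.mul_sum, hv1]
  calc S.comb (Fin.append (s • v) (t • w)) (Fin.append xs ys)
      = S.comb (Fin.snoc (s • v) t) (Fin.snoc xs (S.comb w ys)) :=
        S.comb_append_smul_eq_comb_snoc _ _ _ _ _ hsv ht hw (by rw [hsv1, hst]) hw1
    _ = S.comb (Fin.append (s • v) ![t]) (Fin.append xs ![S.comb w ys]) := by
        rw [Fin.append_right_eq_snoc, Fin.append_right_eq_snoc]; rfl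
    _ = S.comb (Fin.append ![t] (s • v)) (Fin.append ![S.comb w ys] xs) :=
        S.comb_append_comm _ _ _ _ hsv (by simp [ht]) (by rw [hsv1]; simpa using hst)
    _ = S.comb (Fin.snoc ![t] s) (Fin.snoc ![S.comb w ys] (S.comb v xs)) :=
        S.comb_append_smul_eq_comb_snoc _ _ _ _ _ (by simp [ht]) hs hv (by simp; linarith) hv1
    _ = S.comb ![t, s] ![S.comb w ys, S.comb v xs] := by
        congr 1 <;> funext i <;> fin_cases i <;> rfl
    _ = S.comb ![s, t] ![S.comb v xs, S.comb w ys] :=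
        S.comb_pair_comm ht hs (by linarith) _ _

noncomputable def uniformComb (n : ℕ) (u : X) : X :=
  S.comb (fun _ : Fin n => (n : ℝ)⁻¹) (fun _ => u)

theorem comb_uniformComb_uniformComb {a b : ℕ} (ha : 0 < a) (hb : 0 < b) (u : X) :
    S.comb ![(a : ℝ) / (a + b), (b : ℝ) / (a + b)] ![S.uniformComb a u, S.uniformComb b u] =
      S.uniformComb (a + b) u := by
  have ha' : (0 : ℝ) < a := Nat.cast_pos.2 ha
  have hb' : (0 : ℝ) < b := Nat.cast_pos.2 hb
  rw [uniformComb, uniformComb, ← S.comb_append_smul _ _ _ _ (by positivity) (by positivity)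
    (by field_simp) (fun _ => by positivity) (fun _ => by positivity) (by simp [ha'.ne'])
    (by simp [hb'.ne'])]
  congr 1 <;> funext i <;> refine Fin.addCases (fun i => ?_) (fun i => ?_) i <;> simp <;> field_simp

theorem tendsto_comb {ι : Type*} {l : Filter ι} {n : ℕ} (w : Fin n → ℝ) (hw : ∀ i, 0 < w i)
    (hw1 : ∑ i, w i = 1) {xs : ι → Fin n → X} {x : Fin n → X}
    (h : ∀ i, Tendsto (fun k => xs k i) l (nhds (x i))) :
    Tendsto (fun k => S.comb w (xs k)) l (nhds (S.comb w x)) := by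
  rw [tendsto_iff_dist_tendsto_zero]
  refine squeeze_zero (fun _ => dist_nonneg) (fun k => S.comb_nc w (xs k) x hw hw1) ?_
  simpa using tendsto_finsetSum _ fun i _ =>
    (tendsto_iff_dist_tendsto_zero.1 (h i)).const_mul (w i)

theorem tendsto_uniformComb_mul {u : X} (hu : u ∈ S.KX) {c : ℕ} (hc : 0 < c) :
    Tendsto (fun k : ℕ => S.uniformComb (c * k) u) atTop (nhds u) := by
  have h := (S.tendsto_K u).comp (tendsto_id.const_mul_atTop' hc)
  rwa [show S.K u = u from hu] at h

theorem comb_self_of_nat {u : X} (hu : u ∈ S.KX) {a b : ℕ} (ha : 0 < a) (hb : 0 < b) :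
    S.comb ![(a : ℝ) / (a + b), (b : ℝ) / (a + b)] ![u, u] = u := by
  have hab : (0 : ℝ) < a + b := by positivity
  have hlim := S.tendsto_comb ![(a : ℝ) / (a + b), (b : ℝ) / (a + b)]
    (by simp [Fin.forall_fin_two]; constructor <;> positivity) (by simp; field_simp)
    (xs := fun k => ![S.uniformComb (a * k) u, S.uniformComb (b * k) u]) (x := ![u, u])
    (l := atTop) (by simp [Fin.forall_fin_two, S.tendsto_uniformComb_mul hu ha,
      S.tendsto_uniformComb_mul hu hb])
  refine tendsto_nhds_unique (hlim.congr' ?_) (S.tendsto_uniformComb_mul hu (Nat.add_pos_left ha b))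
  filter_upwards [eventually_gt_atTop 0] with k hk
  have hk' : (0 : ℝ) < k := Nat.cast_pos.2 hk
  have h := S.comb_uniformComb_uniformComb (Nat.mul_pos ha hk) (Nat.mul_pos hb hk) u
  simp only [Nat.cast_mul, ← add_mul, mul_div_mul_right _ _ hk'.ne'] at h
  rw [h, add_mul]

theorem _root_.Rat.exists_nat_eq_div_add {q : ℚ} (hq0 : 0 < q) (hq1 : q < 1) :
    ∃ a b : ℕ, 0 < a ∧ 0 < b ∧ (q : ℝ) = a / (a + b) := by
  have hnum : 0 < q.num := Rat.num_pos.2 hq0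
  have hden : q.num < q.den := Rat.num_lt_denom_iff.2 hq1
  refine ⟨q.num.natAbs, q.den - q.num.natAbs, by omega, by omega, ?_⟩
  rw [Nat.cast_sub (by omega), add_sub_cancel, Nat.cast_natAbs, Int.cast_abs,
    abs_of_pos (Int.cast_pos.2 hnum), Rat.cast_def]

theorem comb_self {u : X} (hu : u ∈ S.KX) {t : ℝ} (ht : t ∈ Set.Ioo (0 : ℝ) 1) :
    S.comb ![t, 1 - t] ![u, u] = u := by
  refine Set.EqOn.of_subset_closure (f := fun t => S.comb ![t, 1 - t] ![u, u]) (g := fun _ => u)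
    (s := Set.Ioo 0 1 ∩ Set.range ((↑) : ℚ → ℝ)) ?_ (S.comb_cont u u) continuousOn_const
    Set.inter_subset_left (Rat.denseRange_cast.open_subset_closure_inter isOpen_Ioo) ht
  rintro _ ⟨⟨hq0, hq1⟩, q, rfl⟩
  obtain ⟨a, b, ha, hb, hq⟩ := Rat.exists_nat_eq_div_add (by exact_mod_cast hq0)
    (by exact_mod_cast hq1)
  have hab : (0 : ℝ) < a + b := by positivity
  have h1 : 1 - (a : ℝ) / (a + b) = b / (a + b) := by field_simp; ring
  simp only [hq, h1]
  exact S.comb_self_of_nat hu ha hb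

theorem comb_singleton (x : X) : S.comb ![1] ![x] = x := by
  convert S.comb_single x using 2 <;> funext i <;> fin_cases i <;> rfl

theorem comb_comb_left {s t a b : ℝ} (hs : 0 < s) (ht : 0 < t) (hst : s + t = 1) (ha : 0 < a)
    (hb : 0 < b) (hab : a + b = 1) (x y z : X) :
    S.comb ![s, t] ![S.comb ![a, b] ![x, y], z] = S.comb ![s * a, s * b, t] ![x, y, z] := by
  have h := S.comb_append_smul ![a, b] ![1] ![x, y] ![z] hs ht hst
    (by simp [Fin.forall_fin_two, ha, hb]) (by simp) (by simpa using hab) (by simp)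
  rw [S.comb_singleton] at h
  rw [← h]
  congr 1 <;> funext i <;> fin_cases i <;> simp [Fin.append, Fin.addCases]

theorem comb_comb_right {s t a b : ℝ} (hs : 0 < s) (ht : 0 < t) (hst : s + t = 1) (ha : 0 < a)
    (hb : 0 < b) (hab : a + b = 1) (x y z : X) :
    S.comb ![s, t] ![x, S.comb ![a, b] ![y, z]] = S.comb ![s, t * a, t * b] ![x, y, z] := by
  have h := S.comb_append_smul ![1] ![a, b] ![x] ![y, z] hs ht hst (by simp)
    (by simp [Fin.forall_fin_two, ha, hb]) (by simp) (by simpa using hab)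
  rw [S.comb_singleton] at h
  rw [← h]
  congr 1 <;> funext i <;> fin_cases i <;> simp [Fin.append, Fin.addCases]

end CCSpace

theorem stmt5_general {X : Type} [MetricSpace X] (S : CCSpace X) (x y z : X)
    (hx : x ∈ S.KX) (l m : ℝ)
    (hl : l ∈ Set.Ioo (0 : ℝ) 1) (hm : m ∈ Set.Ioo (0 : ℝ) 1)
    (r : ℝ) (hr : r = m / (1 - l + l * m)) :
    S.comb ![l, 1 - l] ![x, x] = x ∧
      S.comb ![l, 1 - l] ![x, y] = S.comb ![1 - l, l] ![y, x] ∧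
      S.comb ![r, 1 - r] ![S.comb ![l, 1 - l] ![x, y], z] =
        S.comb ![r * l, 1 - r * l] ![x, S.comb ![m, 1 - m] ![y, z]] := by
  obtain ⟨hl0, hl1⟩ := hl
  obtain ⟨hm0, hm1⟩ := hm
  have hD : 0 < 1 - l + l * m := by nlinarith
  have hrD : r * (1 - l + l * m) = m := by rw [hr]; field_simp
  have hr0 : 0 < r := by rw [hr]; positivity
  have hr1 : r < 1 := by nlinarith
  have hrl1 : r * l < 1 := by nlinarith
  refine ⟨S.comb_self hx ⟨hl0, hl1⟩, S.comb_pair_comm hl0 (by linarith) (by ring) x y, ?_⟩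
  rw [S.comb_comb_left hr0 (by linarith) (by ring) hl0 (by linarith) (by ring),
    S.comb_comb_right (by positivity) (by linarith) (by ring) hm0 (by linarith) (by ring)]
  congr 1
  ext i
  fin_cases i
  · rfl
  · show r * (1 - l) = (1 - r * l) * m
    linear_combination hrD
  · show 1 - r = (1 - r * l) * (1 - m)
    linear_combination -hrD

/-- The convexifiable domain is a semiconvex set under
`P_λ(x,y) = [λ,x;1−λ,y]`: reflexivity, symmetry and Świrszcz associativity. -/
theorem stmt5 {X : Type} [MetricSpace X] (S : CCSpace X) (x y z : X)
    (hx : x ∈ S.KX) (hy : y ∈ S.KX) (hz : z ∈ S.KX) (l m : ℝ)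
    (hl : l ∈ Set.Ioo (0 : ℝ) 1) (hm : m ∈ Set.Ioo (0 : ℝ) 1)
    (r : ℝ) (hr : r = m / (1 - l + l * m)) :
    S.comb ![l, 1 - l] ![x, x] = x ∧
      S.comb ![l, 1 - l] ![x, y] = S.comb ![1 - l, l] ![y, x] ∧
      S.comb ![r, 1 - r] ![S.comb ![l, 1 - l] ![x, y], z] =
        S.comb ![r * l, 1 - r * l] ![x, S.comb ![m, 1 - m] ![y, z]] :=
  stmt5_general S x y z hx l m hl hm r hr
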